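/- Let c, d > 2 and n = c+d, and let V(I) ⊆ ℂ^{C(n,2)+1} be the zero set of the ideal I generated by T_∞T_{ij}T_{kl} − T_{ik}T_{jl} + T_{il}T_{jk} for i < j ≤ c < k < l and the Plücker trinomials for other quadruples. Then the open subset of V(I) where T_∞ ≠ 0 is isomorphic as a variety to X̄ × ℂ*, where X̄ is the affine cone over G(2,n), via x ↦ (π̄(x), x_∞), where π̄ multiplies the coordinates x_{ij} with i,j ≤ c by x_∞ and leaves the others unchanged. -/

import Mathlib

open MvPolynomial

/-- Index set for the Plücker variables `T_{ij}`, `i < j` (0-indexed: `1 ≤ i` becomes `0 ≤ i`,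
`j ≤ n` becomes `j.val < n`). -/
abbrev PIdx (n : ℕ) := {p : Fin n × Fin n // p.1 < p.2}

/-- Index set for the variables `T_{ij}` together with the extra variable `T_∞`. -/
abbrev Idx (n : ℕ) := PIdx n ⊕ Unit

/-- The variable `T_{ij}`. -/
noncomputable def W {n : ℕ} (i j : Fin n) (h : i < j) : MvPolynomial (Idx n) ℂ :=
  X (Sum.inl ⟨(i, j), h⟩)

/-- The variable `T_∞`. -/
noncomputable def Tinf {n : ℕ} : MvPolynomial (Idx n) ℂ := X (Sum.inr ())

/-- Generators of the ideal `I`: `T_∞T_{ij}T_{kl} - T_{ik}T_{jl} + T_{il}T_{jk}` for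
quadruples `i < j ≤ c < k < l` (1-indexed; `j ≤ c` is `j.val < c` and `c + 1 ≤ k` is
`c ≤ k.val` in 0-indexed terms), and the Plücker trinomials
`T_{ij}T_{kl} - T_{ik}T_{jl} + T_{il}T_{jk}` for all other quadruples `i < j < k < l`. -/
def IGens (c n : ℕ) : Set (MvPolynomial (Idx n) ℂ) :=
  {P | ∃ (i j k l : Fin n) (hij : i < j) (hjk : j < k) (hkl : k < l),
    ((j.val < c ∧ c ≤ k.val) ∧
      P = Tinf * W i j hij * W k l hkl - W i k (hij.trans hjk) * W j l (hjk.trans hkl)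
            + W i l (hij.trans (hjk.trans hkl)) * W j k hjk) ∨
    (¬(j.val < c ∧ c ≤ k.val) ∧
      P = W i j hij * W k l hkl - W i k (hij.trans hjk) * W j l (hjk.trans hkl)
            + W i l (hij.trans (hjk.trans hkl)) * W j k hjk)}

/-- Generators of the ideal `J = I + (T_∞)`: the variable `T_∞`, the binomials
`-T_{ik}T_{jl} + T_{il}T_{jk}` for quadruples `i < j ≤ c < k < l`, and the Plücker
trinomials for all other quadruples `i < j < k < l`. -/
def JGens (c n : ℕ) : Set (MvPolynomial (Idx n) ℂ) :=
  insert Tinf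
    {P | ∃ (i j k l : Fin n) (hij : i < j) (hjk : j < k) (hkl : k < l),
      ((j.val < c ∧ c ≤ k.val) ∧
        P = - W i k (hij.trans hjk) * W j l (hjk.trans hkl)
              + W i l (hij.trans (hjk.trans hkl)) * W j k hjk) ∨
      (¬(j.val < c ∧ c ≤ k.val) ∧
        P = W i j hij * W k l hkl - W i k (hij.trans hjk) * W j l (hjk.trans hkl)
              + W i l (hij.trans (hjk.trans hkl)) * W j k hjk)}

/-- The affine cone `X̄` over `G(2,n)`: the common zero set of the Plücker relations
`y_{ij}y_{kl} - y_{ik}y_{jl} + y_{il}y_{jk}` in `ℂ^{C(n,2)}`. -/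
def coneGrass (n : ℕ) : Set (PIdx n → ℂ) :=
  {y | ∀ (i j k l : Fin n) (hij : i < j) (hjk : j < k) (hkl : k < l),
    y ⟨(i, j), hij⟩ * y ⟨(k, l), hkl⟩ - y ⟨(i, k), hij.trans hjk⟩ * y ⟨(j, l), hjk.trans hkl⟩
      + y ⟨(i, l), hij.trans (hjk.trans hkl)⟩ * y ⟨(j, k), hjk⟩ = 0}

/-- The zero set `V(I) ⊆ ℂ^{C(n,2)+1}` of the ideal `I`. -/
def VI (c n : ℕ) : Set (Idx n → ℂ) :=
  {x | ∀ P ∈ IGens c n, MvPolynomial.eval x P = 0}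

/-- The open locus of `V(I)` where `T_∞ ≠ 0`. -/
def VIU (c n : ℕ) : Set (Idx n → ℂ) :=
  {x ∈ VI c n | x (Sum.inr ()) ≠ 0}

/- Put `t = x_∞ ≠ 0` and `y = π̄(x)`. For each quadruple `i < j < k < l`, the Plücker relation
evaluated at `y` equals `t^m` times the corresponding generator of `I` evaluated at `x`: `m = 0`
when `j ≤ c < k` (that generator carries the factor `T_∞` itself), otherwise `m ∈ {0, 1, 2}` counts
how many of `k, l` are `≤ c`. So `x ∈ V(I)` iff `π̄(x) ∈ X̄`, and `(y, t) ↦ (π̄_{t⁻¹}(y), t)`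
inverts `x ↦ (π̄(x), x_∞)`. -/

variable {n : ℕ}

def plucker (y : PIdx n → ℂ) (i j k l : Fin n) (hij : i < j) (hjk : j < k) (hkl : k < l) : ℂ :=
  y ⟨(i, j), hij⟩ * y ⟨(k, l), hkl⟩ - y ⟨(i, k), hij.trans hjk⟩ * y ⟨(j, l), hjk.trans hkl⟩
    + y ⟨(i, l), hij.trans (hjk.trans hkl)⟩ * y ⟨(j, k), hjk⟩

lemma mem_coneGrass_iff {y : PIdx n → ℂ} :
    y ∈ coneGrass n ↔ ∀ i j k l (hij : i < j) (hjk : j < k) (hkl : k < l),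
      plucker y i j k l hij hjk hkl = 0 :=
  Iff.rfl

def scaleLow (c : ℕ) (t : ℂ) (y : PIdx n → ℂ) : PIdx n → ℂ :=
  fun p => if p.val.2.val < c then t * y p else y p

lemma scaleLow_one (c : ℕ) (y : PIdx n → ℂ) : scaleLow c 1 y = y := by
  ext p
  simp [scaleLow]

lemma scaleLow_scaleLow (c : ℕ) (s t : ℂ) (y : PIdx n → ℂ) :
    scaleLow c s (scaleLow c t y) = scaleLow c (s * t) y := by
  ext p
  by_cases hp : p.val.2.val < c <;> simp [scaleLow, hp, mul_assoc]

lemma plucker_scaleLow_of_mixed {c : ℕ} (t : ℂ) (y : PIdx n → ℂ) {i j k l : Fin n}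
    (hij : i < j) (hjk : j < k) (hkl : k < l) (hjc : j.val < c) (hck : c ≤ k.val) :
    plucker (scaleLow c t y) i j k l hij hjk hkl =
      t * y ⟨(i, j), hij⟩ * y ⟨(k, l), hkl⟩ - y ⟨(i, k), hij.trans hjk⟩ * y ⟨(j, l), hjk.trans hkl⟩
        + y ⟨(i, l), hij.trans (hjk.trans hkl)⟩ * y ⟨(j, k), hjk⟩ := by
  have hlc : ¬ l.val < c := by have : k.val < l.val := hkl; omega
  simp [plucker, scaleLow, hjc, hlc, Nat.not_lt.2 hck, mul_assoc]

lemma plucker_scaleLow_of_not_mixed {c : ℕ} (t : ℂ) (y : PIdx n → ℂ) {i j k l : Fin n}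
    (hij : i < j) (hjk : j < k) (hkl : k < l) (hmix : ¬ (j.val < c ∧ c ≤ k.val)) :
    ∃ m : ℕ,
      plucker (scaleLow c t y) i j k l hij hjk hkl = t ^ m * plucker y i j k l hij hjk hkl := by
  have hjk' : j.val < k.val := hjk
  have hkl' : k.val < l.val := hkl
  by_cases hjc : j.val < c
  · have hkc : k.val < c := by omega
    by_cases hlc : l.val < c
    · refine ⟨2, ?_⟩
      simp only [plucker, scaleLow, hjc, hkc, hlc, if_true]
      ring
    · refine ⟨1, ?_⟩
      simp only [plucker, scaleLow, hjc, hkc, hlc, if_true, if_false]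
      ring
  · refine ⟨0, ?_⟩
    have hkc : ¬ k.val < c := by omega
    have hlc : ¬ l.val < c := by omega
    simp [plucker, scaleLow, hjc, hkc, hlc]

lemma mem_VI_iff {c : ℕ} {x : Idx n → ℂ} (ht : x (Sum.inr ()) ≠ 0) :
    x ∈ VI c n ↔ scaleLow c (x (Sum.inr ())) (x ∘ Sum.inl) ∈ coneGrass n := by
  rw [mem_coneGrass_iff]
  constructor
  · intro hx i j k l hij hjk hkl
    by_cases hmix : j.val < c ∧ c ≤ k.val
    · have h := hx _ ⟨i, j, k, l, hij, hjk, hkl, Or.inl ⟨hmix, rfl⟩⟩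
      rw [plucker_scaleLow_of_mixed _ _ hij hjk hkl hmix.1 hmix.2]
      simpa [Tinf, W] using h
    · have h := hx _ ⟨i, j, k, l, hij, hjk, hkl, Or.inr ⟨hmix, rfl⟩⟩
      obtain ⟨m, hm⟩ :=
        plucker_scaleLow_of_not_mixed (x (Sum.inr ())) (x ∘ Sum.inl) hij hjk hkl hmix
      rw [hm]
      simp only [W, map_add, map_sub, map_mul, eval_X] at h
      simp [plucker, h]
  · rintro hy P ⟨i, j, k, l, hij, hjk, hkl, ⟨hmix, rfl⟩ | ⟨hmix, rfl⟩⟩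
    · have h := hy i j k l hij hjk hkl
      rw [plucker_scaleLow_of_mixed _ _ hij hjk hkl hmix.1 hmix.2] at h
      simpa [Tinf, W] using h
    · have h := hy i j k l hij hjk hkl
      obtain ⟨m, hm⟩ :=
        plucker_scaleLow_of_not_mixed (x (Sum.inr ())) (x ∘ Sum.inl) hij hjk hkl hmix
      rw [hm, mul_eq_zero, or_iff_right (pow_ne_zero m ht)] at h
      simpa [Tinf, W, plucker] using h

theorem stmt_17_general (c d : ℕ) :
    ∃ e : (VIU c (c + d)) ≃ (coneGrass (c + d)) × {t : ℂ // t ≠ 0},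
      ∀ x : VIU c (c + d),
        ((e x).1 : PIdx (c + d) → ℂ) =
          (fun p => if p.val.2.val < c
            then x.val (Sum.inr ()) * x.val (Sum.inl p)
            else x.val (Sum.inl p)) ∧
        ((e x).2 : ℂ) = x.val (Sum.inr ()) := by
  refine ⟨{
    toFun := fun x => (⟨scaleLow c (x.val (Sum.inr ())) (x.val ∘ Sum.inl),
        (mem_VI_iff x.2.2).1 x.2.1⟩, ⟨x.val (Sum.inr ()), x.2.2⟩)
    invFun := fun yt => ⟨Sum.elim (scaleLow c yt.2.val⁻¹ yt.1.val) (fun _ => yt.2.val),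
        (mem_VI_iff yt.2.2).2 (by
          simpa only [Sum.elim_inr, Sum.elim_comp_inl, scaleLow_scaleLow, mul_inv_cancel₀ yt.2.2,
            scaleLow_one] using yt.1.2),
        yt.2.2⟩
    left_inv := ?_
    right_inv := ?_ }, fun x => ⟨rfl, rfl⟩⟩
  · rintro ⟨x, hx⟩
    ext (p | u)
    · simp [scaleLow_scaleLow, inv_mul_cancel₀ hx.2, scaleLow_one]
    · rfl
  · rintro ⟨⟨y, hy⟩, ⟨t, ht⟩⟩
    ext p
    · simp [scaleLow_scaleLow, mul_inv_cancel₀ ht, scaleLow_one]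
    · rfl

/-- For `c, d > 2` and `n = c + d`, the locus `{T_∞ ≠ 0}` of `V(I)` is isomorphic to
`X̄ × ℂ*`, via `x ↦ (π̄(x), x_∞)`, where `π̄` multiplies the coordinates `x_{ij}` with
`i, j ≤ c` by `x_∞` and leaves the other coordinates unchanged. -/
theorem stmt_17 (c d : ℕ) (hc : 2 < c) (hd : 2 < d) :
    ∃ e : (VIU c (c + d)) ≃ (coneGrass (c + d)) × {t : ℂ // t ≠ 0},
      ∀ x : VIU c (c + d),
        ((e x).1 : PIdx (c + d) → ℂ) =
          (fun p => if p.val.2.val < c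
            then x.val (Sum.inr ()) * x.val (Sum.inl p)
            else x.val (Sum.inl p)) ∧
        ((e x).2 : ℂ) = x.val (Sum.inr ()) :=
  stmt_17_general c d
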